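/- Let γ > 0 and λ > 0, and let g : ℝ → ℝ be continuous and nonnegative on [−1,1], satisfying the Lieb–Liniger integral equation 2π·g(y) = 1 + 2λ·∫_{−1}^{1} g(x)/(λ² + (x − y)²) dx for all y ∈ [−1,1], together with the constraint λ = γ·∫_{−1}^{1} g(x) dx. Define e := (γ³/λ³)·∫_{−1}^{1} g(x)·x² dx. Then e ≥ (π²/3)·(γ/(γ+2))², and consequently e ≥ (π²/3)·(1 − 4/γ). -/

import Mathlib

/-!
The integral equation bounds the density: the kernel is at most `1 / λ²` and `∫ g = λ / γ`, so
`2π g ≤ 1 + 2 / γ`, i.e. `g ≤ M := (γ + 2) / (2πγ)`. Among densities `0 ≤ g ≤ M` on `[-1, 1]` with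
prescribed mass `S = λ / γ`, the second moment is smallest for `M` times the indicator of `[-a, a]`,
`2aM = S` (bathtub principle), whence `∫ g x² ≥ (2/3) M a³`; with `a = πλ / (γ + 2)` this is the bound.
-/

open MeasureTheory Real

theorem integral_Icc_sq_sub_sq {a : ℝ} (ha : 0 ≤ a) :
    ∫ x in Set.Icc (-a) a, (x ^ 2 - a ^ 2) = -(4 / 3) * a ^ 3 := by
  rw [integral_Icc_eq_integral_Ioc, ← intervalIntegral.integral_of_le (by linarith),
    intervalIntegral.integral_sub (intervalIntegral.intervalIntegrable_pow 2)
      intervalIntegrable_const, integral_pow, intervalIntegral.integral_const, smul_eq_mul]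
  ring

/-- Bathtub principle for the second moment: `M` times the indicator of `[-a, a]` minimises
`∫ g x²` among `0 ≤ g ≤ M` of the same mass. -/
theorem sq_mul_setIntegral_sub_le_setIntegral_mul_sq {g : ℝ → ℝ} {a b M : ℝ}
    (hg_cont : ContinuousOn g (Set.Icc (-b) b))
    (hg_nonneg : ∀ x ∈ Set.Icc (-b) b, 0 ≤ g x) (hg_le : ∀ x ∈ Set.Icc (-b) b, g x ≤ M)
    (ha : 0 ≤ a) (hab : a ≤ b) :
    a ^ 2 * (∫ x in Set.Icc (-b) b, g x) - 4 / 3 * M * a ^ 3 ≤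
      ∫ x in Set.Icc (-b) b, g x * x ^ 2 := by
  have hsub : Set.Icc (-a) a ⊆ Set.Icc (-b) b := Set.Icc_subset_Icc (by linarith) hab
  have hg_int : IntegrableOn g (Set.Icc (-b) b) := hg_cont.integrableOn_compact isCompact_Icc
  have hgq_int : IntegrableOn (fun x ↦ g x * (x ^ 2 - a ^ 2)) (Set.Icc (-b) b) :=
    (hg_cont.mul (by fun_prop)).integrableOn_compact isCompact_Icc
  have h_outer : 0 ≤ ∫ x in Set.Icc (-b) b \ Set.Icc (-a) a, g x * (x ^ 2 - a ^ 2) := by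
    refine setIntegral_nonneg (measurableSet_Icc.diff measurableSet_Icc) fun x ⟨hx, hxa⟩ ↦ ?_
    have : a ^ 2 ≤ x ^ 2 := by
      rw [Set.mem_Icc, not_and_or, not_le, not_le] at hxa
      rcases hxa with h | h <;> nlinarith
    exact mul_nonneg (hg_nonneg x hx) (by linarith)
  have h_inner : ∫ x in Set.Icc (-a) a, M * (x ^ 2 - a ^ 2) ≤
      ∫ x in Set.Icc (-a) a, g x * (x ^ 2 - a ^ 2) := by
    refine setIntegral_mono_on ((continuousOn_const.mul (by fun_prop)).integrableOn_compact
      isCompact_Icc) (hgq_int.mono_set hsub) measurableSet_Icc fun x hx ↦ ?_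
    have : x ^ 2 - a ^ 2 ≤ 0 := by nlinarith [hx.1, hx.2]
    exact mul_le_mul_of_nonpos_right (hg_le x (hsub hx)) this
  have h_shift : ∫ x in Set.Icc (-b) b, g x * x ^ 2 =
      (∫ x in Set.Icc (-b) b, g x * (x ^ 2 - a ^ 2)) + a ^ 2 * ∫ x in Set.Icc (-b) b, g x := by
    rw [← integral_const_mul, ← integral_add hgq_int (hg_int.const_mul _)]
    ring_nf
  have h_sdiff := setIntegral_sdiff measurableSet_Icc hgq_int hsub
  rw [integral_const_mul, integral_Icc_sq_sub_sq ha] at h_inner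
  linarith

theorem mul_pi_le_of_liebLiniger_eq {g : ℝ → ℝ} {s : Set ℝ} {lam : ℝ} (hlam : 0 < lam)
    (hs : IsCompact s) (hg_cont : ContinuousOn g s) (hg_nonneg : ∀ x ∈ s, 0 ≤ g x) {y : ℝ}
    (heq : 2 * π * g y = 1 + 2 * lam * ∫ x in s, g x / (lam ^ 2 + (x - y) ^ 2)) :
    2 * π * g y ≤ 1 + 2 / lam * ∫ x in s, g x := by
  have h_kernel : ∫ x in s, g x / (lam ^ 2 + (x - y) ^ 2) ≤ ∫ x in s, g x / lam ^ 2 :=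
    setIntegral_mono_on
      ((hg_cont.div (by fun_prop) fun x _ ↦ by positivity).integrableOn_compact hs)
      ((hg_cont.div_const _).integrableOn_compact hs) hs.measurableSet
      fun x hx ↦ div_le_div_of_nonneg_left (hg_nonneg x hx) (by positivity)
        (by nlinarith [sq_nonneg (x - y)])
  rw [integral_div] at h_kernel
  calc 2 * π * g y ≤ 1 + 2 * lam * ((∫ x in s, g x) / lam ^ 2) := by
        rw [heq]; gcongr
    _ = 1 + 2 / lam * ∫ x in s, g x := by field_simp

theorem one_sub_four_div_le_div_add_two_sq {γ : ℝ} (hγ : 0 < γ) :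
    1 - 4 / γ ≤ (γ / (γ + 2)) ^ 2 := by
  rw [div_pow, le_div_iff₀ (by positivity), ← sub_nonneg]
  have : γ ^ 2 - (1 - 4 / γ) * (γ + 2) ^ 2 = (12 * γ + 16) / γ := by
    field_simp
    ring
  rw [this]
  positivity

theorem statement_6 (γ lam : ℝ) (hγ : 0 < γ) (hlam : 0 < lam) (g : ℝ → ℝ)
    (hg_cont : ContinuousOn g (Set.Icc (-1) 1))
    (hg_nonneg : ∀ x ∈ Set.Icc (-1 : ℝ) 1, 0 ≤ g x)
    (heq : ∀ y ∈ Set.Icc (-1 : ℝ) 1,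
      2 * π * g y = 1 + 2 * lam * ∫ x in Set.Icc (-1 : ℝ) 1, g x / (lam ^ 2 + (x - y) ^ 2))
    (hconstraint : lam = γ * ∫ x in Set.Icc (-1 : ℝ) 1, g x) :
    (π ^ 2 / 3) * (γ / (γ + 2)) ^ 2 ≤
        (γ ^ 3 / lam ^ 3) * ∫ x in Set.Icc (-1 : ℝ) 1, g x * x ^ 2 ∧
      (π ^ 2 / 3) * (1 - 4 / γ) ≤
        (γ ^ 3 / lam ^ 3) * ∫ x in Set.Icc (-1 : ℝ) 1, g x * x ^ 2 := by
  have hS : ∫ x in Set.Icc (-1 : ℝ) 1, g x = lam / γ := by rw [hconstraint]; field_simp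
  set M := (γ + 2) / (2 * π * γ) with hM
  have hg_le : ∀ y ∈ Set.Icc (-1 : ℝ) 1, g y ≤ M := fun y hy ↦ by
    have := mul_pi_le_of_liebLiniger_eq hlam isCompact_Icc hg_cont hg_nonneg (heq y hy)
    rw [hS, show 2 / lam * (lam / γ) = 2 / γ by field_simp] at this
    rw [le_div_iff₀ (by positivity)]
    nlinarith [show γ * (2 / γ) = 2 by field_simp]
  set a := π * lam / (γ + 2) with ha
  have hS_eq : lam / γ = 2 * a * M := by rw [hM, ha]; field_simp
  have hS_le : lam / γ ≤ 2 * M := by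
    simpa [hS, Real.volume_Icc, show (1 : ℝ) - -1 = 2 by norm_num, mul_comm] using
      setIntegral_mono_on (hg_cont.integrableOn_Icc (μ := volume))
        (continuousOn_const (c := M)).integrableOn_Icc
        measurableSet_Icc hg_le
  have ha1 : a ≤ 1 := by nlinarith [show 0 < M by positivity]
  have h_moment := sq_mul_setIntegral_sub_le_setIntegral_mul_sq hg_cont hg_nonneg hg_le
    (by positivity) ha1
  have h_main : π ^ 2 / 3 * (γ / (γ + 2)) ^ 2 ≤
      γ ^ 3 / lam ^ 3 * ∫ x in Set.Icc (-1 : ℝ) 1, g x * x ^ 2 := by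
    calc π ^ 2 / 3 * (γ / (γ + 2)) ^ 2
        = γ ^ 3 / lam ^ 3 * (a ^ 2 * (lam / γ) - 4 / 3 * M * a ^ 3) := by
          rw [hM, ha]; field_simp; ring
      _ ≤ _ := by rw [← hS]; gcongr
  exact ⟨h_main, le_trans (by gcongr; exact one_sub_four_div_le_div_add_two_sq hγ) h_main⟩
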